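/- Let n be an even positive integer and λ > 0 a real number. There exists a nontrivial triple (f₁, f₂, f₃) of eigenfunctions on the star graph with edge lengths π/n, π/n, π (as defined in the context) if and only if either √λ = n·(k + 1/2) for some k ∈ ℕ, or cos(√λ·π/n)·sin(√λ·π) + 2·sin(√λ·π/n)·cos(√λ·π) = 0. -/

import Mathlib

open Real

/-- A triple of eigenfunctions on the star graph with edge lengths `π/n`, `π/n`, `π`:
`C²` functions solving `f'' = -λ f` on their respective edges, continuous at the
central vertex, with the Kirchhoff condition at the central vertex and Neumann
(standard) conditions at the boundary vertices. -/
def IsStarTripleEigenSystem (n : ℕ) (lam : ℝ) (f₁ f₂ f₃ : ℝ → ℝ) : Prop :=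
  ContDiff ℝ 2 f₁ ∧ ContDiff ℝ 2 f₂ ∧ ContDiff ℝ 2 f₃ ∧
  (∀ x ∈ Set.Icc (0 : ℝ) (Real.pi / n), deriv (deriv f₁) x = -lam * f₁ x) ∧
  (∀ x ∈ Set.Icc (0 : ℝ) (Real.pi / n), deriv (deriv f₂) x = -lam * f₂ x) ∧
  (∀ x ∈ Set.Icc (0 : ℝ) Real.pi, deriv (deriv f₃) x = -lam * f₃ x) ∧
  f₁ 0 = f₂ 0 ∧ f₂ 0 = f₃ 0 ∧
  deriv f₁ 0 + deriv f₂ 0 + deriv f₃ 0 = 0 ∧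
  deriv f₁ (Real.pi / n) = 0 ∧ deriv f₂ (Real.pi / n) = 0 ∧ deriv f₃ Real.pi = 0

/-- The triple is nontrivial if some component does not vanish identically on its edge. -/
def StarTripleNontrivial (n : ℕ) (f₁ f₂ f₃ : ℝ → ℝ) : Prop :=
  (∃ x ∈ Set.Icc (0 : ℝ) (Real.pi / n), f₁ x ≠ 0) ∨
  (∃ x ∈ Set.Icc (0 : ℝ) (Real.pi / n), f₂ x ≠ 0) ∨
  (∃ x ∈ Set.Icc (0 : ℝ) Real.pi, f₃ x ≠ 0)

/-!
Each component solves `f'' = -μ² f` (`μ = √λ`) on its edge, so by uniqueness for this ODE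
(an energy argument) it is `a cos (μx) + (Bᵢ/μ) sin (μx)`, with `a` the common value at the
centre and `Bᵢ = fᵢ'(0)`. The boundary conditions become `Bᵢ cos (μℓᵢ) = μ a sin (μℓᵢ)` and
Kirchhoff's condition `B₁ + B₂ + B₃ = 0`. If `cos (μπ/n) ≠ 0` this pins down `B₁ = B₂`, and
eliminating the `Bᵢ` leaves `a μ (cos (μπ/n) sin (μπ) + 2 sin (μπ/n) cos (μπ)) = 0` with `a ≠ 0`
by nontriviality. Conversely, explicit solutions of this form realise each alternative, and
`cos (μπ/n) = 0` is exactly `μ = n (k + 1/2)`.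
-/

open Set

noncomputable def trigComb (μ A B x : ℝ) : ℝ :=
  A * cos (μ * x) + B * sin (μ * x)

section trigComb

variable (μ A B : ℝ)

@[simp]
theorem trigComb_zero : trigComb μ A B 0 = A := by
  simp [trigComb]

theorem hasDerivAt_trigComb (x : ℝ) :
    HasDerivAt (trigComb μ A B) (trigComb μ (μ * B) (-(μ * A)) x) x := by
  have hlin : HasDerivAt (fun y : ℝ => μ * y) μ x := by
    simpa using (hasDerivAt_id x).const_mul μ
  refine ((((hasDerivAt_cos _).comp x hlin).const_mul A).add
    (((hasDerivAt_sin _).comp x hlin).const_mul B)).congr_deriv ?_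
  simp only [trigComb]
  ring

theorem deriv_trigComb : deriv (trigComb μ A B) = trigComb μ (μ * B) (-(μ * A)) :=
  funext fun x => (hasDerivAt_trigComb μ A B x).deriv

theorem deriv_deriv_trigComb (x : ℝ) :
    deriv (deriv (trigComb μ A B)) x = -μ ^ 2 * trigComb μ A B x := by
  rw [deriv_trigComb, deriv_trigComb]
  simp only [trigComb]
  ring

theorem contDiff_trigComb : ContDiff ℝ 2 (trigComb μ A B) := by
  unfold trigComb
  fun_prop

end trigComb

section HarmonicODE

variable {μ L : ℝ} {f g : ℝ → ℝ}

theorem eq_zero_and_deriv_eq_zero_of_deriv_deriv_eq (hμ : μ ≠ 0) (hg : ContDiff ℝ 2 g)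
    (hode : ∀ x ∈ Icc 0 L, deriv (deriv g) x = -μ ^ 2 * g x)
    (h₀ : g 0 = 0) (h₀' : deriv g 0 = 0) :
    ∀ x ∈ Icc 0 L, g x = 0 ∧ deriv g x = 0 := by
  have hd : Differentiable ℝ g := hg.differentiable (by norm_num)
  have hd' : Differentiable ℝ (deriv g) := (hg.deriv' (n := 1)).differentiable one_ne_zero
  set energy : ℝ → ℝ := fun x => deriv g x ^ 2 + μ ^ 2 * g x ^ 2
  have henergy : ∀ x, HasDerivAt energy
      (2 * deriv g x * deriv (deriv g) x + μ ^ 2 * (2 * g x * deriv g x)) x := fun x =>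
    (((hd' x).hasDerivAt.pow 2).add
      (((hd x).hasDerivAt.pow 2).const_mul (μ ^ 2))).congr_deriv (by norm_num)
  have hconst : ∀ x ∈ Icc 0 L, energy x = energy 0 := by
    refine constant_of_has_deriv_right_zero
      (fun x _ => (henergy x).continuousAt.continuousWithinAt) fun x hx => ?_
    convert (henergy x).hasDerivWithinAt using 1
    rw [hode x (Ico_subset_Icc_self hx)]
    ring
  intro x hx
  have hx0 : deriv g x ^ 2 + μ ^ 2 * g x ^ 2 = 0 := by
    simpa [energy, h₀, h₀'] using hconst x hx
  obtain ⟨hd'x, hdx⟩ := (add_eq_zero_iff_of_nonneg (by positivity) (by positivity)).mp hx0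
  exact ⟨by simpa [hμ] using hdx, pow_eq_zero_iff two_ne_zero |>.mp hd'x⟩

theorem eq_trigComb_and_deriv_eq_of_deriv_deriv_eq (hμ : μ ≠ 0) (hf : ContDiff ℝ 2 f)
    (hode : ∀ x ∈ Icc 0 L, deriv (deriv f) x = -μ ^ 2 * f x) :
    ∀ x ∈ Icc 0 L, f x = trigComb μ (f 0) (deriv f 0 / μ) x ∧
      deriv f x = deriv (trigComb μ (f 0) (deriv f 0 / μ)) x := by
  set h := trigComb μ (f 0) (deriv f 0 / μ)
  have hh : ContDiff ℝ 2 h := contDiff_trigComb _ _ _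
  have hderiv : deriv (f - h) = deriv f - deriv h :=
    funext fun x => deriv_sub (hf.differentiable (by norm_num) x)
      (hh.differentiable (by norm_num) x)
  have hderiv2 : deriv (deriv f - deriv h) = deriv (deriv f) - deriv (deriv h) :=
    funext fun x => deriv_sub ((hf.deriv' (n := 1)).differentiable one_ne_zero x)
      ((hh.deriv' (n := 1)).differentiable one_ne_zero x)
  have hzero := eq_zero_and_deriv_eq_zero_of_deriv_deriv_eq (L := L) (g := f - h) hμ (hf.sub hh)
    (fun x hx => by
      simp only [hderiv, hderiv2, Pi.sub_apply, hode x hx, h, deriv_deriv_trigComb]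
      ring)
    (by simp [h])
    (by simp only [hderiv, Pi.sub_apply, h, deriv_trigComb, trigComb_zero]; field_simp; ring)
  intro x hx
  obtain ⟨h₁, h₂⟩ := hzero x hx
  rw [hderiv] at h₂
  exact ⟨sub_eq_zero.mp h₁, sub_eq_zero.mp h₂⟩

theorem deriv_mul_cos_eq_of_deriv_eq_zero (hμ : μ ≠ 0) (hL : 0 ≤ L) (hf : ContDiff ℝ 2 f)
    (hode : ∀ x ∈ Icc 0 L, deriv (deriv f) x = -μ ^ 2 * f x) (hN : deriv f L = 0) :
    deriv f 0 * cos (μ * L) = μ * f 0 * sin (μ * L) := by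
  have h := (eq_trigComb_and_deriv_eq_of_deriv_deriv_eq hμ hf hode L ⟨hL, le_rfl⟩).2
  rw [hN, deriv_trigComb] at h
  simp only [trigComb] at h
  field_simp at h
  linarith

end HarmonicODE

theorem cos_mul_pi_div_natCast_eq_zero_iff {μ : ℝ} (hμ : 0 < μ) (n : ℕ) :
    cos (μ * (π / n)) = 0 ↔ ∃ k : ℕ, μ = n * ((k : ℝ) + 1 / 2) := by
  rcases Nat.eq_zero_or_pos n with rfl | hn
  · -- `π / 0 = 0`, so both sides are false
    simp [hμ.ne']
  have hscale (k : ℝ) : μ * (π / n) = (2 * k + 1) * π / 2 ↔ μ = n * (k + 1 / 2) := by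
    have hrhs : (2 * k + 1) * π / 2 = n * (k + 1 / 2) * (π / n) := by
      field_simp
    rw [hrhs, mul_left_inj' (by positivity)]
  rw [cos_eq_zero_iff]
  constructor
  · rintro ⟨k, hk⟩
    rw [hscale] at hk
    have hk_pos : (0 : ℝ) < k + 1 / 2 := pos_of_mul_pos_right (hk ▸ hμ) (Nat.cast_nonneg n)
    have hk_nonneg : 0 ≤ k := by
      have : (-1 : ℤ) < k := by exact_mod_cast (by linarith : (-1 : ℝ) < k)
      omega
    lift k to ℕ using hk_nonneg
    exact ⟨k, by exact_mod_cast hk⟩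
  · rintro ⟨k, hk⟩
    exact ⟨k, by rw [hscale]; exact_mod_cast hk⟩

section StarGraph

variable {n : ℕ} {μ : ℝ} {f₁ f₂ f₃ : ℝ → ℝ}

theorem cos_eq_zero_or_secular_of_isStarTripleEigenSystem (hμ : μ ≠ 0)
    (hsys : IsStarTripleEigenSystem n (μ ^ 2) f₁ f₂ f₃) (hnt : StarTripleNontrivial n f₁ f₂ f₃) :
    cos (μ * (π / n)) = 0 ∨
      cos (μ * (π / n)) * sin (μ * π) + 2 * sin (μ * (π / n)) * cos (μ * π) = 0 := by
  obtain ⟨hc₁, hc₂, hc₃, ho₁, ho₂, ho₃, h₁₂, h₂₃, hK, hN₁, hN₂, hN₃⟩ := hsys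
  rw [or_iff_not_imp_left]
  intro hc
  have e₁ := deriv_mul_cos_eq_of_deriv_eq_zero hμ (by positivity) hc₁ ho₁ hN₁
  have e₂ := deriv_mul_cos_eq_of_deriv_eq_zero hμ (by positivity) hc₂ ho₂ hN₂
  have e₃ := deriv_mul_cos_eq_of_deriv_eq_zero hμ pi_pos.le hc₃ ho₃ hN₃
  rw [← h₁₂] at e₂
  rw [← h₂₃, ← h₁₂] at e₃
  have ha : f₁ 0 ≠ 0 := by
    intro ha
    have hB₁ : deriv f₁ 0 = 0 := by simpa [ha, hc] using e₁
    have hB₂ : deriv f₂ 0 = 0 := by simpa [ha, hc] using e₂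
    have hB₃ : deriv f₃ 0 = 0 := by linarith
    rcases hnt with ⟨x, hx, hfx⟩ | ⟨x, hx, hfx⟩ | ⟨x, hx, hfx⟩
    · exact hfx (eq_zero_and_deriv_eq_zero_of_deriv_deriv_eq hμ hc₁ ho₁ ha hB₁ x hx).1
    · exact hfx
        (eq_zero_and_deriv_eq_zero_of_deriv_deriv_eq hμ hc₂ ho₂ (h₁₂ ▸ ha) hB₂ x hx).1
    · exact hfx
        (eq_zero_and_deriv_eq_zero_of_deriv_deriv_eq hμ hc₃ ho₃ (h₂₃ ▸ h₁₂ ▸ ha) hB₃ x hx).1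
  have key : f₁ 0 * μ *
      (cos (μ * (π / n)) * sin (μ * π) + 2 * sin (μ * (π / n)) * cos (μ * π)) = 0 := by
    linear_combination cos (μ * (π / n)) * cos (μ * π) * hK - cos (μ * π) * e₁
      - cos (μ * π) * e₂ - cos (μ * (π / n)) * e₃
  simpa [ha, hμ] using key

theorem isStarTripleEigenSystem_trigComb {a B₁ B₂ B₃ : ℝ} (hK : B₁ + B₂ + B₃ = 0)
    (h₁ : B₁ * cos (μ * (π / n)) = a * sin (μ * (π / n)))
    (h₂ : B₂ * cos (μ * (π / n)) = a * sin (μ * (π / n)))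
    (h₃ : B₃ * cos (μ * π) = a * sin (μ * π)) :
    IsStarTripleEigenSystem n (μ ^ 2) (trigComb μ a B₁) (trigComb μ a B₂) (trigComb μ a B₃) := by
  refine ⟨contDiff_trigComb _ _ _, contDiff_trigComb _ _ _, contDiff_trigComb _ _ _,
    fun x _ => deriv_deriv_trigComb _ _ _ x, fun x _ => deriv_deriv_trigComb _ _ _ x,
    fun x _ => deriv_deriv_trigComb _ _ _ x, by simp, by simp, ?_, ?_, ?_, ?_⟩ <;>
  simp only [deriv_trigComb, trigComb, mul_zero, cos_zero, sin_zero, mul_one]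
  · linear_combination μ * hK
  · linear_combination μ * h₁
  · linear_combination μ * h₂
  · linear_combination μ * h₃

theorem exists_isStarTripleEigenSystem_of_cos_eq_zero (hc : cos (μ * (π / n)) = 0) :
    ∃ f₁ f₂ f₃, IsStarTripleEigenSystem n (μ ^ 2) f₁ f₂ f₃ ∧ StarTripleNontrivial n f₁ f₂ f₃ := by
  refine ⟨_, _, _, isStarTripleEigenSystem_trigComb (a := 0) (B₁ := 1) (B₂ := -1) (B₃ := 0)
    (by ring) (by simp [hc]) (by simp [hc]) (by simp),
    Or.inl ⟨π / n, ⟨by positivity, le_rfl⟩, fun hs => ?_⟩⟩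
  rcases sin_eq_zero_iff_cos_eq.mp (by simpa [trigComb] using hs) with h | h <;>
    simp [hc] at h

theorem exists_isStarTripleEigenSystem_of_secular (hc : cos (μ * (π / n)) ≠ 0)
    (hsec : cos (μ * (π / n)) * sin (μ * π) + 2 * sin (μ * (π / n)) * cos (μ * π) = 0) :
    ∃ f₁ f₂ f₃, IsStarTripleEigenSystem n (μ ^ 2) f₁ f₂ f₃ ∧ StarTripleNontrivial n f₁ f₂ f₃ :=
  ⟨_, _, _, isStarTripleEigenSystem_trigComb (a := cos (μ * (π / n)))
    (B₁ := sin (μ * (π / n))) (B₂ := sin (μ * (π / n))) (B₃ := -2 * sin (μ * (π / n)))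
    (by ring) (by ring) (by ring) (by linear_combination -hsec),
    Or.inl ⟨0, ⟨le_rfl, by positivity⟩, by simpa using hc⟩⟩

end StarGraph

theorem star_triple_eigenvalue_characterization_general (n : ℕ) (lam : ℝ) (hlam : 0 < lam) :
    (∃ f₁ f₂ f₃ : ℝ → ℝ, IsStarTripleEigenSystem n lam f₁ f₂ f₃ ∧
        StarTripleNontrivial n f₁ f₂ f₃)
      ↔ ((∃ k : ℕ, Real.sqrt lam = n * ((k : ℝ) + 1 / 2)) ∨
          Real.cos (Real.sqrt lam * (Real.pi / n)) * Real.sin (Real.sqrt lam * Real.pi)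
            + 2 * Real.sin (Real.sqrt lam * (Real.pi / n))
              * Real.cos (Real.sqrt lam * Real.pi) = 0) := by
  obtain ⟨μ, hμ, rfl⟩ : ∃ μ, 0 < μ ∧ lam = μ ^ 2 :=
    ⟨√lam, sqrt_pos.mpr hlam, (sq_sqrt hlam.le).symm⟩
  rw [sqrt_sq hμ.le, ← cos_mul_pi_div_natCast_eq_zero_iff hμ]
  constructor
  · rintro ⟨f₁, f₂, f₃, hsys, hnt⟩
    exact cos_eq_zero_or_secular_of_isStarTripleEigenSystem hμ.ne' hsys hnt
  · intro h
    by_cases hc : cos (μ * (π / n)) = 0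
    · exact exists_isStarTripleEigenSystem_of_cos_eq_zero hc
    · exact exists_isStarTripleEigenSystem_of_secular hc (h.resolve_left hc)

/-- Secular characterization of the eigenvalues of the standard Laplacian on the star
graph with edge lengths `π/n`, `π/n`, `π` for even `n`: a nontrivial eigenfunction triple
for `λ > 0` exists iff `√λ = n (k + 1/2)` for some `k ∈ ℕ`, or
`cos(√λ π/n) sin(√λ π) + 2 sin(√λ π/n) cos(√λ π) = 0`. -/
theorem star_triple_eigenvalue_characterization (n : ℕ) (hn : 0 < n) (hne : Even n)
    (lam : ℝ) (hlam : 0 < lam) :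
    (∃ f₁ f₂ f₃ : ℝ → ℝ, IsStarTripleEigenSystem n lam f₁ f₂ f₃ ∧
        StarTripleNontrivial n f₁ f₂ f₃)
      ↔ ((∃ k : ℕ, Real.sqrt lam = n * ((k : ℝ) + 1 / 2)) ∨
          Real.cos (Real.sqrt lam * (Real.pi / n)) * Real.sin (Real.sqrt lam * Real.pi)
            + 2 * Real.sin (Real.sqrt lam * (Real.pi / n))
              * Real.cos (Real.sqrt lam * Real.pi) = 0) :=
  star_triple_eigenvalue_characterization_general n lam hlam
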